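/- arXiv:1911.00272 — 2 statements merged into one kernel-verified Lean document; each statement's English description precedes it below -/
import Mathlib

section
/- For every square sub-row-stochastic matrix A (all entries in [0,1], each row sums to at most 1), |det(A)| ≤ 1, with equality if and only if A is a permutation matrix. -/
/-!
Expanding `∏ i, ∑ j, A i j` gives `∑ f, ∏ i, A i (f i)` over all maps `f`, and the permanent
of `Aᵀ` is the part of this sum over bijective `f`. For a nonnegative matrix this yields
`|det A| ≤ perm Aᵀ ≤ ∏ i, ∑ j, A i j ≤ 1`. If `|det A| = 1`, all of these are equalities, so
every non-injective `f` contributes `0`. Changing one value of a permutation `σ` whose term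
is nonzero to the column of another nonzero entry of the same row would give a non-injective
`f` with a nonzero term; hence `A` is supported on the graph of `σ`, and since each row sum
is then `1`, `A` is the permutation matrix of `σ`.
-/

/-- A matrix is a permutation matrix if there is a permutation `π` with
`A c (π c) = 1` for all `c` and all other entries `0`. -/
def IsPermMatrix {C : ℕ} (A : Matrix (Fin C) (Fin C) ℝ) : Prop :=
  ∃ π : Equiv.Perm (Fin C), ∀ i j, A i j = if π i = j then 1 else 0

open Finset Function Equiv

namespace Matrix

variable {n R : Type*} [Fintype n] [DecidableEq n] {A : Matrix n n R}

theorem prod_sum_eq_permanent_add_sum_not_injective [CommSemiring R] (A : Matrix n n R) :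
    ∏ j, ∑ i, A i j =
      A.permanent + ∑ f ∈ univ.filter (fun f : n → n ↦ ¬ Injective f), ∏ j, A (f j) j := by
  rw [Fintype.prod_sum, ← sum_filter_add_sum_filter_not univ Injective, permanent]
  congr 1
  symm
  exact sum_bij (fun σ _ ↦ ⇑σ) (fun σ _ ↦ by simp [σ.injective])
    (fun _ _ _ _ h ↦ coe_fn_injective h)
    (fun f hf ↦ ⟨ofBijective f (mem_filter.1 hf).2.bijective_of_finite, mem_univ _, rfl⟩)
    (fun _ _ ↦ rfl)

section LinearOrderedRing

variable [CommRing R] [LinearOrder R] [IsStrictOrderedRing R]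

theorem permanent_le_prod_sum (hA : ∀ i j, 0 ≤ A i j) : A.permanent ≤ ∏ j, ∑ i, A i j := by
  rw [prod_sum_eq_permanent_add_sum_not_injective]
  exact le_add_of_nonneg_right (sum_nonneg fun f _ ↦ prod_nonneg fun j _ ↦ hA _ _)

theorem prod_eq_zero_of_permanent_eq_prod_sum (hA : ∀ i j, 0 ≤ A i j)
    (h : A.permanent = ∏ j, ∑ i, A i j) {f : n → n} (hf : ¬ Injective f) :
    ∏ j, A (f j) j = 0 := by
  rw [prod_sum_eq_permanent_add_sum_not_injective, left_eq_add,
    sum_eq_zero_iff_of_nonneg fun f _ ↦ prod_nonneg fun j _ ↦ hA _ _] at h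
  exact h f (by simpa using hf)

theorem exists_perm_of_permanent_eq_prod_sum (hA : ∀ i j, 0 ≤ A i j)
    (h : A.permanent = ∏ j, ∑ i, A i j) (h0 : A.permanent ≠ 0) :
    ∃ σ : Perm n, ∀ i j, A i j ≠ 0 → i = σ j := by
  obtain ⟨σ, -, hσ⟩ := exists_ne_zero_of_sum_ne_zero h0
  refine ⟨σ, fun i j hij ↦ by_contra fun hne ↦ ?_⟩
  -- Redirecting column `j` of `σ` to row `i` gives a non-injective `f` with a nonzero term.
  have hj : σ.symm i ≠ j := fun h ↦ hne (by rw [← h, apply_symm_apply])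
  have hf : ¬ Injective (update σ j i) := fun hinj ↦
    hj (hinj (by rw [update_of_ne hj, update_self, apply_symm_apply]))
  refine prod_ne_zero_iff.2 (fun k _ ↦ ?_) (prod_eq_zero_of_permanent_eq_prod_sum hA h hf)
  rcases eq_or_ne k j with rfl | hk
  · simpa using hij
  · simpa [hk] using prod_ne_zero_iff.1 hσ k (mem_univ k)

theorem abs_det_le_permanent (hA : ∀ i j, 0 ≤ A i j) : |A.det| ≤ A.permanent := by
  rw [det_apply]
  refine (abs_sum_le_sum_abs _ _).trans_eq (sum_congr rfl fun σ _ ↦ ?_)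
  rw [Units.smul_def, zsmul_eq_mul, abs_mul, abs_unit_intCast, one_mul,
    abs_of_nonneg (prod_nonneg fun i _ ↦ hA _ _)]

end LinearOrderedRing

end Matrix

open Matrix

theorem IsPermMatrix.abs_det_eq_one {C : ℕ} {A : Matrix (Fin C) (Fin C) ℝ} (hA : IsPermMatrix A) :
    |A.det| = 1 := by
  obtain ⟨π, hπ⟩ := hA
  have : A = π.permMatrix ℝ := by
    ext i j
    simp [hπ, Perm.permMatrix, PEquiv.toMatrix_apply]
  rw [this, det_permutation, abs_unit_intCast]

/-- For every square sub-row-stochastic matrix `A` (entries in `[0,1]`,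
each row sums to at most 1), `|det A| ≤ 1`, with equality iff `A` is a permutation matrix. -/
theorem abs_det_le_one_of_sub_row_stochastic {C : ℕ} (A : Matrix (Fin C) (Fin C) ℝ)
    (hrange : ∀ i j, 0 ≤ A i j ∧ A i j ≤ 1)
    (hrow : ∀ i, ∑ j, A i j ≤ 1) :
    |A.det| ≤ 1 ∧ (|A.det| = 1 ↔ IsPermMatrix A) := by
  have hA : ∀ i j, 0 ≤ Aᵀ i j := fun i j ↦ (hrange j i).1
  have hrow_nonneg : ∀ i, 0 ≤ ∑ j, A i j := fun i ↦ sum_nonneg fun j _ ↦ hA j i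
  have hprod : ∏ i, ∑ j, A i j ≤ 1 := prod_le_one (fun i _ ↦ hrow_nonneg i) (fun i _ ↦ hrow i)
  have hperm : Aᵀ.permanent ≤ ∏ i, ∑ j, A i j := permanent_le_prod_sum hA
  have hdet : |A.det| ≤ Aᵀ.permanent := det_transpose A ▸ abs_det_le_permanent hA
  refine ⟨hdet.trans (hperm.trans hprod), fun h1 ↦ ?_, IsPermMatrix.abs_det_eq_one⟩
  have hperm1 : Aᵀ.permanent = 1 := by linarith
  have hprod1 : ∏ i, ∑ j, A i j = 1 := by linarith
  obtain ⟨σ, hσ⟩ := exists_perm_of_permanent_eq_prod_sum hA (hperm1.trans hprod1.symm)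
    (hperm1 ▸ one_ne_zero)
  have hoff : ∀ i j, σ i ≠ j → A i j = 0 := fun i j h ↦ by_contra fun hij ↦ h (hσ j i hij).symm
  have hrow1 : ∀ i, ∑ j, A i j = 1 := fun i ↦ le_antisymm (hrow i) <| by
    simpa [hprod1] using prod_le_prod_of_subset_of_le_one (subset_univ {i})
      (fun k _ ↦ hrow_nonneg k) (fun k _ _ ↦ hrow k)
  refine ⟨σ, fun i j ↦ ?_⟩
  split_ifs with h
  · rw [← h, ← hrow1 i, sum_eq_single (σ i) (fun j _ hj ↦ hoff i j hj.symm) (by simp)]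
  · exact hoff i j h
end

section
/- Quality ordering of expected payments: assume reports X̂_1,...,X̂_n (n ≥ 3) are conditionally independent given a ground-truth variable G (all valued in {1,...,C}), and Quality(X̂_i) := DMI(X̂_i; G)^2. Then for any two agents i, j, E[p_i] − E[p_j] = (Quality(X̂_i) − Quality(X̂_j)) · (Σ_{k≠i,j} a_1 a_2 det(U_{X̂_k|G})^2), where p_i = Σ_{k≠i} det(M_1^{ik})det(M_2^{ik}) is agent i's DMI-Mechanism payment and a_ℓ = binom(|T_ℓ|,C)·C!. -/
open MeasureTheory Finset

/-- The per-task outcome: all agents' reports together with the ground truth. -/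
abbrev Outcome (n C : ℕ) := (Fin n → Fin C) × Fin C

/-- The count matrix of agents `i` and `k` over the tasks in `Tl`. -/
def countMatrix {C T n : ℕ} (Tl : Finset (Fin T)) (i k : Fin n)
    (ω : Fin T → Outcome n C) : Matrix (Fin C) (Fin C) ℝ :=
  Matrix.of fun c c' => ∑ t ∈ Tl, if (ω t).1 i = c ∧ (ω t).1 k = c' then (1 : ℝ) else 0

/-- Agent `i`'s DMI-Mechanism payment: `p_i = Σ_{k≠i} det(M₁^{ik})·det(M₂^{ik})`. -/
def payment {C T n : ℕ} (T1 T2 : Finset (Fin T)) (i : Fin n)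
    (ω : Fin T → Outcome n C) : ℝ :=
  ∑ k ∈ Finset.univ.erase i,
    (countMatrix T1 i k ω).det * (countMatrix T2 i k ω).det

/-- The joint distribution matrix of agent `i`'s report and the ground truth `G`. -/
noncomputable def jointWithG {n C : ℕ} (ν : Measure (Outcome n C)) (i : Fin n) :
    Matrix (Fin C) (Fin C) ℝ :=
  Matrix.of fun c g => (ν {p | p.1 i = c ∧ p.2 = g}).toReal

/-- Agent `i`'s quality score: `Quality(X̂ᵢ) = DMI(X̂ᵢ; G)²`. -/
noncomputable def quality {n C : ℕ} (ν : Measure (Outcome n C)) (i : Fin n) : ℝ :=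
  |(jointWithG ν i).det| ^ 2

/-- The transition matrix `U_{X̂ₖ|G}`: entry `(g, c)` is `P[X̂ₖ = c | G = g]`. -/
noncomputable def transFromG {n C : ℕ} (ν : Measure (Outcome n C)) (k : Fin n) :
    Matrix (Fin C) (Fin C) ℝ :=
  Matrix.of fun g c => (ν {p | p.1 k = c ∧ p.2 = g}).toReal / (ν {p | p.2 = g}).toReal

open ProbabilityTheory

/-!
Write `J_{ik}` for the joint distribution matrix of the reports of agents `i` and `k`. Expanding
`det M_ℓ^{ik}` over permutations and over maps `Fin C → T_ℓ` that pick one task per column, a map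
that is not injective contributes nothing (one task cannot carry two different reports of agent
`k`), while an injective one contributes a product of probabilities, since tasks are i.i.d.; hence
`E[det M_ℓ^{ik}] = a_ℓ · det J_{ik}`. The matrices `M₁^{ik}` and `M₂^{ik}` are built from disjoint
sets of tasks, so they are independent and `E[p_i] = Σ_{k≠i} a₁ a₂ (det J_{ik})²`.
Conditional independence given `G` factors `J_{ik} = J_{iG} · U_{k|G}`, so
`(det J_{ik})² = Quality(X̂ᵢ) · det(U_{k|G})²`, and the terms `k = j` of `E[p_i]` and `k = i` of
`E[p_j]` cancel because `J_{ji} = J_{ij}ᵀ`.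
-/

theorem measure_eq_sum_measure_inter_preimage {α β : Type*} [MeasurableSpace α]
    [MeasurableSpace β] [MeasurableSingletonClass β] [Fintype β] (μ : Measure α) {φ : α → β}
    (hφ : Measurable φ) (A : Set α) : μ A = ∑ b, μ (A ∩ φ ⁻¹' {b}) := by
  have := sum_measure_preimage_singleton (μ := μ.restrict A) univ (f := φ)
    fun b _ => hφ (measurableSet_singleton b)
  simp only [coe_univ, Set.preimage_univ, Measure.restrict_apply_univ] at this
  rw [← this]
  refine sum_congr rfl fun b _ => ?_
  rw [Measure.restrict_apply (hφ (measurableSet_singleton b)), Set.inter_comm]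

theorem sum_prod_of_forall_mem_eq {ι α R : Type*} [Fintype ι] [DecidableEq ι] [Fintype α]
    [CommSemiring R] (h : ι → α → R) (s : Finset ι) (a : ι → α)
    [DecidablePred fun f : ι → α => ∀ m ∈ s, f m = a m] :
    ∑ f ∈ univ.filter fun f : ι → α => ∀ m ∈ s, f m = a m, ∏ m, h m (f m) =
      (∏ m ∈ s, h m (a m)) * ∏ m ∈ sᶜ, ∑ v, h m v := by
  have hpi : univ.filter (fun f : ι → α => ∀ m ∈ s, f m = a m) =
      Fintype.piFinset fun m => if m ∈ s then {a m} else univ := by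
    ext f
    simp only [mem_filter, mem_univ, true_and, Fintype.mem_piFinset]
    refine ⟨fun hf m => ?_, fun hf m hm => by simpa [hm] using hf m⟩
    split_ifs with hm
    · simp [hf m hm]
    · exact mem_univ _
  rw [hpi, ← prod_univ_sum, ← prod_mul_prod_compl s]
  congr 1
  · exact prod_congr rfl fun m hm => by simp [hm]
  · exact prod_congr rfl fun m hm => by simp [mem_compl.1 hm]

theorem integral_prod_comp_of_injective {ι κ α : Type*} [Fintype ι] [Fintype κ]
    [MeasurableSpace α] (μ : Measure α) [IsProbabilityMeasure μ] {f : κ → ι}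
    (hf : f.Injective) (g : κ → α → ℝ) (hg : ∀ c, StronglyMeasurable (g c)) :
    ∫ ω, ∏ c, g c (ω (f c)) ∂(Measure.pi fun _ => μ) = ∏ c, ∫ x, g c x ∂μ := by
  have hindep : iIndepFun (fun c (ω : ι → α) => ω (f c)) (Measure.pi fun _ => μ) :=
    (iIndepFun_pi (X := fun _ => id) fun _ => aemeasurable_id).precomp hf
  rw [hindep.integral_fun_prod_comp (fun c => (measurable_pi_apply (f c)).aemeasurable)
    fun c => (hg c).aestronglyMeasurable]
  exact prod_congr rfl fun c _ => integral_comp_eval (hg c).aestronglyMeasurable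

theorem card_filter_injective_eq_descFactorial {κ β : Type*} [Fintype κ] [DecidableEq κ]
    [Fintype β] [DecidableEq β] :
    #(univ.filter fun f : κ → β => f.Injective) =
      (Fintype.card β).descFactorial (Fintype.card κ) := by
  rw [← Fintype.card_subtype, Fintype.card_congr (Equiv.subtypeInjectiveEquivEmbedding κ β),
    Fintype.card_embedding_eq]

theorem integral_mul_comp_restrict_of_disjoint {ι α : Type*} [Fintype ι] [MeasurableSpace α]
    (μ : Measure α) [IsProbabilityMeasure μ] {s t : Finset ι} (hst : Disjoint s t)
    {F : (s → α) → ℝ} {G : (t → α) → ℝ} (hF : Measurable F) (hG : Measurable G) :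
    ∫ ω : ι → α, F (fun i => ω i) * G (fun i => ω i) ∂(Measure.pi fun _ => μ) =
      (∫ ω : ι → α, F (fun i => ω i) ∂(Measure.pi fun _ => μ)) *
        ∫ ω : ι → α, G (fun i => ω i) ∂(Measure.pi fun _ => μ) := by
  have hindep := (iIndepFun_pi (X := fun _ => id) (μ := fun _ : ι => μ)
    fun _ => aemeasurable_id).indepFun_finset s t hst fun i => measurable_pi_apply i
  exact (hindep.comp hF hG).integral_fun_mul_eq_mul_integral
    (hF.comp (by fun_prop)).aestronglyMeasurable (hG.comp (by fun_prop)).aestronglyMeasurable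

variable {n C T : ℕ}

-- Conditional independence of the reports given `G`, multiplied through by `P(G = g)ⁿ`.
def ReportsCondIndep (ν : Measure (Outcome n C)) : Prop :=
  ∀ g : Fin C, ∀ f : Fin n → Fin C,
    ν {p | p.2 = g} ^ (n - 1) * ν {p | p.1 = f ∧ p.2 = g} = ∏ k, ν {p | p.1 k = f k ∧ p.2 = g}

noncomputable def jointMatrix (ν : Measure (Outcome n C)) (i k : Fin n) :
    Matrix (Fin C) (Fin C) ℝ :=
  Matrix.of fun c c' => (ν {p | p.1 i = c ∧ p.1 k = c'}).toReal

theorem sum_measure_report_eq (ν : Measure (Outcome n C)) (m : Fin n) (g : Fin C) :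
    ∑ v, ν {p | p.1 m = v ∧ p.2 = g} = ν {p | p.2 = g} := by
  rw [measure_eq_sum_measure_inter_preimage ν (φ := fun p => p.1 m) .of_discrete]
  congr! 2 with v
  ext p; simp [and_comm]

theorem measure_reports_pair_eq_sum (ν : Measure (Outcome n C)) {i k : Fin n} (hik : i ≠ k)
    (c c' g : Fin C) :
    ν {p | (p.1 i = c ∧ p.1 k = c') ∧ p.2 = g} =
      ∑ f : Fin n → Fin C with ∀ m ∈ ({i, k} : Finset (Fin n)),
          f m = Function.update (fun _ => c') i c m,
        ν {p | p.1 = f ∧ p.2 = g} := by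
  rw [measure_eq_sum_measure_inter_preimage ν (φ := Prod.fst) .of_discrete, sum_filter]
  refine sum_congr rfl fun f _ => ?_
  split_ifs with hf
  · simp only [mem_insert, mem_singleton, forall_eq_or_imp, forall_eq, Function.update_self,
      Function.update_of_ne hik.symm] at hf
    congr 1; ext p
    simp only [Set.mem_inter_iff, Set.mem_ofPred_eq, Set.mem_preimage, Set.mem_singleton_iff]
    constructor
    · rintro ⟨⟨-, h⟩, rfl⟩; exact ⟨rfl, h⟩
    · rintro ⟨rfl, h⟩; exact ⟨⟨hf, h⟩, rfl⟩
  · convert measure_empty (μ := ν)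
    ext p
    simp only [Set.mem_inter_iff, Set.mem_ofPred_eq, Set.mem_preimage, Set.mem_singleton_iff,
      Set.mem_empty_iff_false, iff_false]
    rintro ⟨⟨⟨hi, hk⟩, -⟩, rfl⟩
    simp [hik.symm, hi, hk] at hf

theorem ReportsCondIndep.pairwise {ν : Measure (Outcome n C)} [IsFiniteMeasure ν]
    (hci : ReportsCondIndep ν) {i k : Fin n} (hik : i ≠ k) (c c' g : Fin C) :
    ν {p | p.2 = g} * ν {p | (p.1 i = c ∧ p.1 k = c') ∧ p.2 = g} =
      ν {p | p.1 i = c ∧ p.2 = g} * ν {p | p.1 k = c' ∧ p.2 = g} := by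
  have hmul : ν {p | p.2 = g} ^ (n - 1) * ν {p | (p.1 i = c ∧ p.1 k = c') ∧ p.2 = g} =
      ν {p | p.1 i = c ∧ p.2 = g} * ν {p | p.1 k = c' ∧ p.2 = g} * ν {p | p.2 = g} ^ (n - 2) := by
    rw [measure_reports_pair_eq_sum ν hik, mul_sum]
    simp_rw [hci g]
    rw [sum_prod_of_forall_mem_eq (fun m v => ν {p | p.1 m = v ∧ p.2 = g}), prod_pair hik]
    simp only [sum_measure_report_eq, prod_const, card_compl, card_pair hik, Fintype.card_fin,
      Function.update_self, Function.update_of_ne hik.symm]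
  have hn : 2 ≤ n := by have := Fin.val_ne_of_ne hik; omega
  by_cases hP : ν {p | p.2 = g} = 0
  · have hY : ν {p | p.1 i = c ∧ p.2 = g} = 0 := measure_mono_null (fun p hp => hp.2) hP
    rw [hP, hY, zero_mul, zero_mul]
  · rw [show n - 1 = n - 2 + 1 by omega, pow_succ, mul_assoc, mul_comm _ (_ ^ (n - 2))] at hmul
    exact (ENNReal.mul_right_inj (pow_ne_zero _ hP)
      (ENNReal.pow_ne_top (measure_ne_top _ _))).1 hmul

theorem ReportsCondIndep.jointMatrix_eq_mul {ν : Measure (Outcome n C)} [IsFiniteMeasure ν]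
    (hci : ReportsCondIndep ν) {i k : Fin n} (hik : i ≠ k) :
    jointMatrix ν i k = jointWithG ν i * transFromG ν k := by
  ext c c'
  rw [Matrix.mul_apply]
  simp only [jointMatrix, jointWithG, transFromG, Matrix.of_apply]
  rw [measure_eq_sum_measure_inter_preimage ν (φ := Prod.snd) .of_discrete,
    ENNReal.toReal_sum fun _ _ => measure_ne_top _ _]
  refine sum_congr rfl fun g _ => ?_
  have h := congrArg ENNReal.toReal (hci.pairwise hik c c' g)
  rw [ENNReal.toReal_mul, ENNReal.toReal_mul] at h
  obtain hP | hP := eq_or_ne (ν {p | p.2 = g}).toReal 0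
  · rw [hP, div_zero, mul_zero]
    refine le_antisymm (hP ▸ ENNReal.toReal_mono (measure_ne_top _ _) ?_) ENNReal.toReal_nonneg
    exact measure_mono fun p hp => hp.2
  · rw [mul_div_assoc', eq_div_iff hP, mul_comm]
    exact h

theorem det_countMatrix_eq_sum (Tl : Finset (Fin T)) (i k : Fin n) (ω : Fin T → Outcome n C) :
    (countMatrix Tl i k ω).det = ∑ σ : Equiv.Perm (Fin C), (Equiv.Perm.sign σ : ℝ) *
      ∑ f : Fin C → Tl, ∏ c, if (ω (f c)).1 i = σ c ∧ (ω (f c)).1 k = c then 1 else 0 := by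
  rw [Matrix.det_apply]
  refine sum_congr rfl fun σ _ => ?_
  rw [Units.smul_def, zsmul_eq_mul]
  congr 1
  simp only [countMatrix, Matrix.of_apply, ← Finset.sum_coe_sort Tl]
  exact Fintype.prod_sum _

theorem integral_prod_countMatrix_entries (ν : Measure (Outcome n C)) [IsProbabilityMeasure ν]
    {Tl : Finset (Fin T)} (i k : Fin n) (σ : Equiv.Perm (Fin C)) (f : Fin C → Tl) :
    ∫ ω : Fin T → Outcome n C, (∏ c, if (ω (f c)).1 i = σ c ∧ (ω (f c)).1 k = c then (1 : ℝ) else 0)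
        ∂(Measure.pi fun _ => ν) =
      if f.Injective then ∏ c, ν.real {p | p.1 i = σ c ∧ p.1 k = c} else 0 := by
  split_ifs with hf
  · have := integral_prod_comp_of_injective ν (f := Subtype.val ∘ f)
      (Subtype.val_injective.comp hf)
      (fun c => {p : Outcome n C | p.1 i = σ c ∧ p.1 k = c}.indicator 1)
      fun c => .of_discrete
    simp only [Function.comp_apply, integral_indicator_one MeasurableSet.of_discrete] at this
    rw [← this]
    refine integral_congr_ae (.of_forall fun ω => prod_congr rfl fun c _ => ?_)
    simp [Set.indicator_apply]
  · obtain ⟨c₁, c₂, hf12, hc⟩ : ∃ c₁ c₂, f c₁ = f c₂ ∧ c₁ ≠ c₂ := by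
      simpa [Function.Injective] using hf
    convert integral_zero (Fin T → Outcome n C) ℝ with ω
    refine prod_eq_zero_iff.2 ?_
    by_contra! h
    have h₁ := h c₁ (mem_univ _)
    have h₂ := h c₂ (mem_univ _)
    simp only [ne_eq, ite_eq_right_iff, one_ne_zero, imp_false, not_not] at h₁ h₂
    exact hc (h₁.2.symm.trans (hf12 ▸ h₂.2))

theorem integral_det_countMatrix (ν : Measure (Outcome n C)) [IsProbabilityMeasure ν]
    (Tl : Finset (Fin T)) (i k : Fin n) :
    ∫ ω, (countMatrix Tl i k ω).det ∂(Measure.pi fun _ => ν) =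
      Tl.card.descFactorial C * (jointMatrix ν i k).det := by
  have hσ : ∀ σ : Equiv.Perm (Fin C),
      ∫ ω : Fin T → Outcome n C, (Equiv.Perm.sign σ : ℝ) * ∑ f : Fin C → Tl,
          (∏ c, if (ω (f c)).1 i = σ c ∧ (ω (f c)).1 k = c then (1 : ℝ) else 0)
        ∂(Measure.pi fun _ => ν) =
      Tl.card.descFactorial C *
        ((Equiv.Perm.sign σ : ℝ) * ∏ c, (ν {p | p.1 i = σ c ∧ p.1 k = c}).toReal) := by
    intro σ
    rw [integral_const_mul, integral_finsetSum _ fun _ _ => .of_finite]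
    simp_rw [integral_prod_countMatrix_entries]
    rw [sum_ite, sum_const_zero, add_zero, sum_const, card_filter_injective_eq_descFactorial,
      nsmul_eq_mul, Fintype.card_coe, Fintype.card_fin]
    simp only [measureReal_def]
    ring
  simp_rw [det_countMatrix_eq_sum]
  rw [integral_finsetSum _ fun _ _ => .of_finite, Matrix.det_apply, mul_sum]
  simp_rw [hσ, Units.smul_def, zsmul_eq_mul]
  rfl

theorem integral_det_mul_det_countMatrix (ν : Measure (Outcome n C)) [IsProbabilityMeasure ν]
    {T1 T2 : Finset (Fin T)} (hdisj : Disjoint T1 T2) (i k : Fin n) :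
    ∫ ω, (countMatrix T1 i k ω).det * (countMatrix T2 i k ω).det ∂(Measure.pi fun _ => ν) =
      (∫ ω, (countMatrix T1 i k ω).det ∂(Measure.pi fun _ => ν)) *
        ∫ ω, (countMatrix T2 i k ω).det ∂(Measure.pi fun _ => ν) := by
  simp only [countMatrix, ← sum_coe_sort T1, ← sum_coe_sort T2]
  exact integral_mul_comp_restrict_of_disjoint ν hdisj
    (F := fun r : T1 → Outcome n C => (Matrix.of fun c c' =>
        ∑ t : T1, if (r t).1 i = c ∧ (r t).1 k = c' then (1 : ℝ) else 0).det)
    (G := fun r : T2 → Outcome n C => (Matrix.of fun c c' =>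
        ∑ t : T2, if (r t).1 i = c ∧ (r t).1 k = c' then (1 : ℝ) else 0).det)
    .of_discrete .of_discrete

theorem integral_payment (ν : Measure (Outcome n C)) [IsProbabilityMeasure ν]
    {T1 T2 : Finset (Fin T)} (hdisj : Disjoint T1 T2) (a : Fin n) :
    ∫ ω, payment T1 T2 a ω ∂(Measure.pi fun _ => ν) =
      ∑ k ∈ univ.erase a,
        T1.card.descFactorial C * T2.card.descFactorial C * (jointMatrix ν a k).det ^ 2 := by
  unfold payment
  rw [integral_finsetSum _ fun _ _ => .of_finite]
  refine sum_congr rfl fun k _ => ?_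
  rw [integral_det_mul_det_countMatrix ν hdisj, integral_det_countMatrix, integral_det_countMatrix]
  ring

theorem jointMatrix_swap (ν : Measure (Outcome n C)) (i k : Fin n) :
    jointMatrix ν k i = (jointMatrix ν i k).transpose := by
  ext c c'
  simp only [jointMatrix, Matrix.transpose_apply, Matrix.of_apply, and_comm]

theorem expected_payment_quality_ordering_general (C T n : ℕ)
    (ν : Measure (Outcome n C)) [IsProbabilityMeasure ν]
    (hci : ∀ g : Fin C, ∀ f : Fin n → Fin C,
      ν {p | p.2 = g} ^ (n - 1) * ν {p | p.1 = f ∧ p.2 = g} =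
        ∏ k, ν {p | p.1 k = f k ∧ p.2 = g})
    (T1 T2 : Finset (Fin T)) (hdisj : Disjoint T1 T2)
    (i j : Fin n) (hij : i ≠ j) :
    (∫ ω, payment T1 T2 i ω ∂(Measure.pi fun _ : Fin T => ν)) -
      (∫ ω, payment T1 T2 j ω ∂(Measure.pi fun _ : Fin T => ν))
      = (quality ν i - quality ν j) *
        ∑ k ∈ (Finset.univ.erase i).erase j,
          ((T1.card.choose C * Nat.factorial C : ℕ) : ℝ) *
          ((T2.card.choose C * Nat.factorial C : ℕ) : ℝ) *
          (transFromG ν k).det ^ 2 := by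
  have hj : j ∈ univ.erase i := mem_erase.2 ⟨hij.symm, mem_univ j⟩
  have hi : i ∈ univ.erase j := mem_erase.2 ⟨hij, mem_univ i⟩
  rw [integral_payment ν hdisj, integral_payment ν hdisj, ← add_sum_erase _ _ hj,
    ← add_sum_erase _ _ hi, jointMatrix_swap ν i j, Matrix.det_transpose, erase_right_comm,
    add_sub_add_left_eq_sub, ← sum_sub_distrib, mul_sum]
  refine sum_congr rfl fun k hk => ?_
  obtain ⟨hki, hkj⟩ : k ≠ i ∧ k ≠ j := by simpa using hk
  rw [ReportsCondIndep.jointMatrix_eq_mul hci hki.symm,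
    ReportsCondIndep.jointMatrix_eq_mul hci hkj.symm, Matrix.det_mul, Matrix.det_mul, quality,
    quality, sq_abs, sq_abs, mul_comm (T1.card.choose C), mul_comm (T2.card.choose C),
    ← Nat.descFactorial_eq_factorial_mul_choose, ← Nat.descFactorial_eq_factorial_mul_choose]
  ring

/-- quality ordering of expected payments: assume the reports of the
`n ≥ 3` agents are conditionally independent given the ground truth `G`, tasks are i.i.d.
with per-task distribution `ν`, and the DMI-Mechanism uses `T ≥ 2C` tasks split into
disjoint parts `T₁, T₂` of size `≥ C`. Then for any two agents `i ≠ j`,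
`E[pᵢ] − E[pⱼ] = (Quality(X̂ᵢ) − Quality(X̂ⱼ)) · Σ_{k≠i,j} a₁ a₂ det(U_{X̂ₖ|G})²`. -/
theorem expected_payment_quality_ordering (C T n : ℕ) (hn : 3 ≤ n) (hT : 2 * C ≤ T)
    (ν : Measure (Outcome n C)) [IsProbabilityMeasure ν]
    (hci : ∀ g : Fin C, ∀ f : Fin n → Fin C,
      ν {p | p.2 = g} ^ (n - 1) * ν {p | p.1 = f ∧ p.2 = g} =
        ∏ k, ν {p | p.1 k = f k ∧ p.2 = g})
    (T1 T2 : Finset (Fin T)) (hdisj : Disjoint T1 T2)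
    (h1 : C ≤ T1.card) (h2 : C ≤ T2.card)
    (i j : Fin n) (hij : i ≠ j) :
    (∫ ω, payment T1 T2 i ω ∂(Measure.pi fun _ : Fin T => ν)) -
      (∫ ω, payment T1 T2 j ω ∂(Measure.pi fun _ : Fin T => ν))
      = (quality ν i - quality ν j) *
        ∑ k ∈ (Finset.univ.erase i).erase j,
          ((T1.card.choose C * Nat.factorial C : ℕ) : ℝ) *
          ((T2.card.choose C * Nat.factorial C : ℕ) : ℝ) *
          (transFromG ν k).det ^ 2 :=
  expected_payment_quality_ordering_general C T n ν hci T1 T2 hdisj i j hij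
end
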